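/- arXiv:1512.08203 — 3 statements merged into one kernel-verified Lean document; each statement's English description precedes it below -/
import Mathlib

section
/- Fix n ≥ 1 and λ ∈ ℂ, and define on ℂ[x_1,…,x_n, y_1,…,y_n, z, q_1,…,q_n] the operators d_i = −2 y_i ∂_z + ∂_{x_i}(E_x + E_y + E_z − λ + n − 1/2) + q_i D_s and e_i = 2 x_i ∂_z + ∂_{y_i}(E_x + E_y + E_z − λ + n − 1/2) − i ∂_{q_i} D_s, where E_x = Σ_j x_j∂_{x_j}, E_y = Σ_j y_j∂_{y_j}, E_z = z∂_z, and D_s = Σ_j (i q_j ∂_{y_j} − ∂_{x_j}∂_{q_j}). Then Σ_{j=1}^n (x_j d_j + y_j e_j) = (E_x + E_y)(E_x + E_y + E_z − λ + n − 1/2) − i X_s D_s, where X_s = Σ_j (i x_j q_j + y_j ∂_{q_j}). -/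
noncomputable section
open MvPolynomial

/-- Variables: x_1..x_n, y_1..y_n, z, q_1..q_n. -/
abbrev V4 (n : ℕ) := Fin n ⊕ Fin n ⊕ Unit ⊕ Fin n
abbrev R4 (n : ℕ) := MvPolynomial (V4 n) ℂ
abbrev Op4 (n : ℕ) := Module.End ℂ (R4 n)

def xv {n : ℕ} (j : Fin n) : V4 n := Sum.inl j
def yv {n : ℕ} (j : Fin n) : V4 n := Sum.inr (Sum.inl j)
def zv {n : ℕ} : V4 n := Sum.inr (Sum.inr (Sum.inl ()))
def qv {n : ℕ} (j : Fin n) : V4 n := Sum.inr (Sum.inr (Sum.inr j))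

def mX {n : ℕ} (j : Fin n) : Op4 n := LinearMap.mulLeft ℂ (X (xv j))
def mY {n : ℕ} (j : Fin n) : Op4 n := LinearMap.mulLeft ℂ (X (yv j))
def mQ {n : ℕ} (j : Fin n) : Op4 n := LinearMap.mulLeft ℂ (X (qv j))
def dX {n : ℕ} (j : Fin n) : Op4 n := (pderiv (xv j)).toLinearMap
def dY {n : ℕ} (j : Fin n) : Op4 n := (pderiv (yv j)).toLinearMap
def dQ {n : ℕ} (j : Fin n) : Op4 n := (pderiv (qv j)).toLinearMap
def dZ (n : ℕ) : Op4 n := (pderiv (zv : V4 n)).toLinearMap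

/-- Euler operators E_x = Σ x_j ∂_{x_j}, E_y = Σ y_j ∂_{y_j}, E_z = z ∂_z. -/
def Ex (n : ℕ) : Op4 n := ∑ j : Fin n, mX j * dX j
def Ey (n : ℕ) : Op4 n := ∑ j : Fin n, mY j * dY j
def Ez (n : ℕ) : Op4 n := LinearMap.mulLeft ℂ (X (zv : V4 n)) * dZ n

/-- The symplectic Dirac operator D_s = Σ_j (i q_j ∂_{y_j} − ∂_{x_j} ∂_{q_j}). -/
def Ds (n : ℕ) : Op4 n := ∑ j : Fin n, (Complex.I • (mQ j * dY j) - dX j * dQ j)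
/-- X_s = Σ_j (i x_j q_j + y_j ∂_{q_j}). -/
def Xs (n : ℕ) : Op4 n := ∑ j : Fin n, (Complex.I • (mX j * mQ j) + mY j * dQ j)

/-- The scalar operator E_x + E_y + E_z − λ + n − 1/2. -/
def Slam (n : ℕ) (lam : ℂ) : Op4 n :=
  Ex n + Ey n + Ez n + ((n : ℂ) - lam - 1/2) • (1 : Op4 n)

/-- d_i = −2 y_i ∂_z + ∂_{x_i}(E_x + E_y + E_z − λ + n − 1/2) + q_i D_s. -/
def dOp (n : ℕ) (lam : ℂ) (i : Fin n) : Op4 n :=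
  (-2 : ℂ) • (mY i * dZ n) + dX i * Slam n lam + mQ i * Ds n

/-- e_i = 2 x_i ∂_z + ∂_{y_i}(E_x + E_y + E_z − λ + n − 1/2) − i ∂_{q_i} D_s. -/
def eOp (n : ℕ) (lam : ℂ) (i : Fin n) : Op4 n :=
  (2 : ℂ) • (mX i * dZ n) + dY i * Slam n lam - Complex.I • (dQ i * Ds n)
/-- Σ_j (x_j d_j + y_j e_j) = (E_x+E_y)(E_x+E_y+E_z−λ+n−1/2) − i X_s D_s. -/
theorem sum_xd_ye (n : ℕ) (hn : 1 ≤ n) (lam : ℂ) :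
    ∑ j : Fin n, (mX j * dOp n lam j + mY j * eOp n lam j)
      = (Ex n + Ey n) * Slam n lam - Complex.I • (Xs n * Ds n) := by
  have hcomm : ∀ j : Fin n, mX j * mY j = mY j * mX j := by
    intro j
    refine LinearMap.ext fun p => ?_
    simp [mX, mY, Module.End.mul_apply, mul_left_comm]
  have key : ∀ j : Fin n,
      mX j * dOp n lam j + mY j * eOp n lam j
        = (mX j * dX j + mY j * dY j) * Slam n lam
          - Complex.I • ((Complex.I • (mX j * mQ j) + mY j * dQ j) * Ds n) := by
    intro j
    simp only [dOp, eOp, mul_add, mul_sub, add_mul, mul_smul_comm, smul_mul_assoc,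
      smul_add, smul_smul, Complex.I_mul_I, neg_smul, one_smul, ← mul_assoc, hcomm j]
    module
  rw [Finset.sum_congr rfl (fun j _ => key j), Finset.sum_sub_distrib,
    ← Finset.sum_mul, ← Finset.smul_sum, ← Finset.sum_mul]
  simp only [Ex, Ey, Xs, ← Finset.sum_add_distrib]
end
end

section
/- Fix n ≥ 1 and λ ∈ ℂ, and define d_i, e_i on ℂ[x_1,…,x_n, y_1,…,y_n, z, q_1,…,q_n] as: d_i = −2 y_i ∂_z + ∂_{x_i}(E_x + E_y + E_z − λ + n − 1/2) + q_i D_s and e_i = 2 x_i ∂_z + ∂_{y_i}(E_x + E_y + E_z − λ + n − 1/2) − i ∂_{q_i} D_s. Then Σ_{j=1}^n (∂_{x_j} e_j − ∂_{y_j} d_j) = 2 ∂_z (E_x + E_y + 2n) + i D_s², where D_s = Σ_j (i q_j ∂_{y_j} − ∂_{x_j}∂_{q_j}), E_x = Σ_j x_j∂_{x_j}, E_y = Σ_j y_j∂_{y_j}, E_z = z∂_z. -/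
noncomputable section
open MvPolynomial

lemma pderiv_pderiv {σ : Type*} [DecidableEq σ] (a b : σ) (p : MvPolynomial σ ℂ) :
    pderiv a (pderiv b p) = pderiv b (pderiv a p) := by
  induction p using MvPolynomial.induction_on with
  | C c => simp
  | add p q hp hq => simp [hp, hq]
  | mul_X p k hp =>
    by_cases hak : a = k <;> by_cases hbk : b = k <;>
      simp [pderiv_mul, pderiv_X, hp, hak, hbk, Pi.single_apply] <;>
      (subst_vars; rw [hp]; ring)

def Dv {n : ℕ} (v : V4 n) : Op4 n := (pderiv v).toLinearMap
def Mv {n : ℕ} (v : V4 n) : Op4 n := LinearMap.mulLeft ℂ (X v)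

lemma Dv_comm {n : ℕ} (a b : V4 n) (c : Op4 n) : Dv a * (Dv b * c) = Dv b * (Dv a * c) :=
  LinearMap.ext fun p => by
    simp only [Module.End.mul_apply, Dv, LinearMap.coe_mk, Derivation.coeFn_coe]
    exact pderiv_pderiv a b (c p)

lemma Dv_Mv {n : ℕ} {a b : V4 n} (h : a ≠ b) (c : Op4 n) :
    Dv a * (Mv b * c) = Mv b * (Dv a * c) :=
  LinearMap.ext fun p => by
    simp only [Module.End.mul_apply, Dv, Mv, Derivation.coeFn_coe, LinearMap.mulLeft_apply]
    rw [pderiv_mul, pderiv_X_of_ne h.symm]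
    simp

lemma Dv_Mv_self {n : ℕ} (a : V4 n) (c : Op4 n) :
    Dv a * (Mv a * c) = Mv a * (Dv a * c) + c :=
  LinearMap.ext fun p => by
    simp only [Module.End.mul_apply, Dv, Mv, Derivation.coeFn_coe, LinearMap.mulLeft_apply,
      LinearMap.add_apply]
    rw [pderiv_mul, pderiv_X_self]
    ring

lemma per_term (n : ℕ) (lam : ℂ) (j : Fin n) :
    dX j * eOp n lam j - dY j * dOp n lam j
      = (2 : ℂ) • ((mX j * dX j + mY j * dY j + 2) * dZ n)
        + (Complex.I • (Complex.I • (mQ j * dY j) - dX j * dQ j)) * Ds n := by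
  have hyq : (yv j : V4 n) ≠ qv j := by simp [yv, qv]
  have h1 : dX j * (mX j * dZ n) = mX j * (dX j * dZ n) + dZ n := Dv_Mv_self _ _
  have h2 : dY j * (mY j * dZ n) = mY j * (dY j * dZ n) + dZ n := Dv_Mv_self _ _
  have h3 : dX j * (dY j * Slam n lam) = dY j * (dX j * Slam n lam) := Dv_comm _ _ _
  have h4 : dY j * (mQ j * Ds n) = mQ j * (dY j * Ds n) := Dv_Mv hyq _
  simp only [eOp, dOp, mul_add, mul_sub, mul_smul_comm]
  rw [h1, h2, h3, h4]
  simp only [smul_sub, smul_smul, Complex.I_mul_I, add_mul, sub_mul,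
    smul_mul_assoc, mul_assoc, two_mul]
  module

lemma dZ_comm_mXdX {n : ℕ} (j : Fin n) : dZ n * (mX j * dX j) = mX j * dX j * dZ n := by
  have h : (zv : V4 n) ≠ xv j := by simp [zv, xv]
  have h1 : dZ n * (mX j * dX j) = mX j * (dZ n * dX j) := Dv_Mv h _
  have h2 : dZ n * (dX j * 1) = dX j * (dZ n * 1) := Dv_comm _ _ 1
  rw [h1, show dZ n * dX j = dX j * dZ n by simpa using h2, ← mul_assoc]

lemma dZ_comm_mYdY {n : ℕ} (j : Fin n) : dZ n * (mY j * dY j) = mY j * dY j * dZ n := by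
  have h : (zv : V4 n) ≠ yv j := by simp [zv, yv]
  have h1 : dZ n * (mY j * dY j) = mY j * (dZ n * dY j) := Dv_Mv h _
  have h2 : dZ n * (dY j * 1) = dY j * (dZ n * 1) := Dv_comm _ _ 1
  rw [h1, show dZ n * dY j = dY j * dZ n by simpa using h2, ← mul_assoc]

lemma dZ_comm_Ex (n : ℕ) : dZ n * Ex n = Ex n * dZ n := by
  rw [Ex, Finset.mul_sum, Finset.sum_mul]
  exact Finset.sum_congr rfl fun j _ => dZ_comm_mXdX j

lemma dZ_comm_Ey (n : ℕ) : dZ n * Ey n = Ey n * dZ n := by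
  rw [Ey, Finset.mul_sum, Finset.sum_mul]
  exact Finset.sum_congr rfl fun j _ => dZ_comm_mYdY j

lemma sum_const_two (n : ℕ) : (∑ _j : Fin n, (2 : Op4 n)) = ((2 * n : ℕ) : Op4 n) := by
  rw [Finset.sum_const, Finset.card_univ, Fintype.card_fin, nsmul_eq_mul, Nat.cast_mul,
    Nat.cast_ofNat, (Nat.cast_commute n (2 : Op4 n)).eq]

/-- Σ_j (∂_{x_j} e_j − ∂_{y_j} d_j) = 2 ∂_z (E_x + E_y + 2n) + i D_s². -/
theorem sum_dxe_dyd (n : ℕ) (hn : 1 ≤ n) (lam : ℂ) :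
    ∑ j : Fin n, (dX j * eOp n lam j - dY j * dOp n lam j)
      = (2 : ℂ) • (dZ n * (Ex n + Ey n + ((2 * n : ℕ) : Op4 n)))
        + Complex.I • (Ds n * Ds n) := by
  have key : dZ n * (Ex n + Ey n + ((2 * n : ℕ) : Op4 n))
      = (Ex n + Ey n + ((2 * n : ℕ) : Op4 n)) * dZ n := by
    rw [mul_add, mul_add, add_mul, add_mul, dZ_comm_Ex, dZ_comm_Ey,
      ((Nat.cast_commute (2 * n) (dZ n)).eq).symm]
  rw [key]
  calc ∑ j : Fin n, (dX j * eOp n lam j - dY j * dOp n lam j)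
      = ∑ j : Fin n, ((2 : ℂ) • ((mX j * dX j + mY j * dY j + 2) * dZ n)
        + (Complex.I • (Complex.I • (mQ j * dY j) - dX j * dQ j)) * Ds n) :=
        Finset.sum_congr rfl fun j _ => per_term n lam j
    _ = (2 : ℂ) • ((∑ j : Fin n, (mX j * dX j + mY j * dY j + 2)) * dZ n)
        + (Complex.I • Ds n) * Ds n := by
        rw [Finset.sum_add_distrib, ← Finset.smul_sum, ← Finset.sum_mul, ← Finset.sum_mul,
          ← Finset.smul_sum, Ds]
    _ = (2 : ℂ) • ((Ex n + Ey n + ((2 * n : ℕ) : Op4 n)) * dZ n)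
        + Complex.I • (Ds n * Ds n) := by
        rw [Finset.sum_add_distrib, Finset.sum_add_distrib, sum_const_two, Ex, Ey,
          smul_mul_assoc]
end
end

section
/- Let n ≥ 1 and define, on ℂ[x̂_1,…,x̂_n, ŷ_1,…,ŷ_n, ẑ, q_1,…,q_n], the operators D̂ = Σ_j (i q_j ∂_{x̂_j} − ∂_{ŷ_j}∂_{q_j}) and X̂ = Σ_j (i ŷ_j q_j + x̂_j ∂_{q_j}), and set D₁ = D̂ + (1/2) X̂ ∂_{ẑ} and D₂ = D₁² − (i/4)∂_{ẑ}. Then [D̂, X̂] = −i(Ê + n), where Ê = Σ_j (x̂_j ∂_{x̂_j} + ŷ_j ∂_{ŷ_j}), and consequently D₁² = D̂² + X̂ D̂ ∂_{ẑ} − (i/2)(Ê + n)∂_{ẑ} + (1/4) X̂² ∂_{ẑ}². -/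
noncomputable section
open MvPolynomial

/-- D̂ = Σ_j (i q_j ∂_{x̂_j} − ∂_{ŷ_j} ∂_{q_j}). -/
def Dhat (n : ℕ) : Op4 n := ∑ j : Fin n, (Complex.I • (mQ j * dX j) - dY j * dQ j)
/-- X̂ = Σ_j (i ŷ_j q_j + x̂_j ∂_{q_j}). -/
def Xhat (n : ℕ) : Op4 n := ∑ j : Fin n, (Complex.I • (mY j * mQ j) + mX j * dQ j)
/-- The first-order contact symplectic Dirac operator D₁ = D̂ + (1/2) X̂ ∂_ẑ. -/
def D1 (n : ℕ) : Op4 n := Dhat n + (1/2 : ℂ) • (Xhat n * dZ n)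

/-!
`D̂ = ∑ⱼ D̂ⱼ` and `X̂ = ∑ⱼ X̂ⱼ`, where `D̂ⱼ, X̂ⱼ` involve only the variables `x̂ⱼ, ŷⱼ, qⱼ`.
Differential operators in disjoint sets of variables commute, so `[D̂, X̂] = ∑ⱼ [D̂ⱼ, X̂ⱼ]`, and
each single-index bracket is `−i(x̂ⱼ∂_{x̂ⱼ} + ŷⱼ∂_{ŷⱼ} + 1)` by the Leibniz rule. Since `∂_ẑ`
commutes with `D̂` and `X̂`, expanding `D₁²` only requires reordering `D̂X̂ = X̂D̂ + [D̂, X̂]`.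
-/

theorem LinearMap.commute_mulLeft_mulLeft {R A : Type*} [CommSemiring R] [CommSemiring A]
    [Algebra R A] (a b : A) : Commute (mulLeft R a) (mulLeft R b) :=
  LinearMap.ext fun c => by simp only [Module.End.mul_apply, mulLeft_apply, mul_left_comm]

namespace MvPolynomial

variable {R σ : Type*} [CommRing R]

theorem pderiv_pderiv_comm (i j : σ) (f : MvPolynomial σ R) :
    pderiv i (pderiv j f) = pderiv j (pderiv i f) := by
  -- the commutator of two derivations is a derivation, and this one kills every variable
  have h : ⁅pderiv i, pderiv j⁆ = (0 : Derivation R (MvPolynomial σ R) (MvPolynomial σ R)) :=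
    derivation_ext fun k => by
      classical
      rw [Derivation.commutator_apply]
      simp [pderiv_X, Pi.single_apply, apply_ite]
  rw [← sub_eq_zero, ← Derivation.commutator_apply, h, Derivation.zero_apply]

theorem commute_pderiv_pderiv (i j : σ) :
    Commute ((pderiv i).toLinearMap : Module.End R (MvPolynomial σ R)) (pderiv j).toLinearMap :=
  LinearMap.ext (pderiv_pderiv_comm i j)

theorem commute_pderiv_mulLeft_X_of_ne {i j : σ} (h : i ≠ j) :
    Commute ((pderiv i).toLinearMap : Module.End R (MvPolynomial σ R))
      (LinearMap.mulLeft R (X j)) :=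
  LinearMap.ext fun f => by simp [pderiv_X_of_ne h.symm]

variable (R) in
def weylSubalgebra (S : Set σ) : Subalgebra R (Module.End R (MvPolynomial σ R)) :=
  Algebra.adjoin R
    ((fun i => LinearMap.mulLeft R (X i)) '' S ∪ (fun i => (pderiv i).toLinearMap) '' S)

variable {S T : Set σ} {i : σ}

theorem mulLeft_X_mem_weylSubalgebra (h : i ∈ S) :
    LinearMap.mulLeft R (X i) ∈ weylSubalgebra R S :=
  Algebra.subset_adjoin (Or.inl ⟨i, h, rfl⟩)

theorem pderiv_mem_weylSubalgebra (h : i ∈ S) :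
    (pderiv i).toLinearMap ∈ weylSubalgebra R S :=
  Algebra.subset_adjoin (Or.inr ⟨i, h, rfl⟩)

theorem commute_of_mem_weylSubalgebra (hST : Disjoint S T)
    {a b : Module.End R (MvPolynomial σ R)} (ha : a ∈ weylSubalgebra R S)
    (hb : b ∈ weylSubalgebra R T) : Commute a b := by
  refine Algebra.commute_of_mem_adjoin_of_forall_mem_commute hb ?_
  rintro _ (⟨j, hj, rfl⟩ | ⟨j, hj, rfl⟩) <;>
    refine (Algebra.commute_of_mem_adjoin_of_forall_mem_commute ha ?_).symm <;>
    rintro _ (⟨i, hi, rfl⟩ | ⟨i, hi, rfl⟩)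
  · exact LinearMap.commute_mulLeft_mulLeft _ _
  · exact (commute_pderiv_mulLeft_X_of_ne (hST.ne_of_mem hi hj)).symm
  · exact commute_pderiv_mulLeft_X_of_ne (hST.ne_of_mem hi hj).symm
  · exact commute_pderiv_pderiv _ _

end MvPolynomial

section SymplecticPair

open MvPolynomial LinearMap

variable {σ : Type*}

def dhatTerm (x y q : σ) : Module.End ℂ (MvPolynomial σ ℂ) :=
  Complex.I • (mulLeft ℂ (X q) * (pderiv x).toLinearMap)
    - (pderiv y).toLinearMap * (pderiv q).toLinearMap

def xhatTerm (x y q : σ) : Module.End ℂ (MvPolynomial σ ℂ) :=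
  Complex.I • (mulLeft ℂ (X y) * mulLeft ℂ (X q)) + mulLeft ℂ (X x) * (pderiv q).toLinearMap

theorem dhatTerm_mul_xhatTerm_sub {x y q : σ} (hxy : x ≠ y) (hxq : x ≠ q) (hyq : y ≠ q) :
    dhatTerm x y q * xhatTerm x y q - xhatTerm x y q * dhatTerm x y q
      = -Complex.I • (mulLeft ℂ (X x) * (pderiv x).toLinearMap
          + mulLeft ℂ (X y) * (pderiv y).toLinearMap + 1) := by
  refine LinearMap.ext fun f => ?_
  simp only [dhatTerm, xhatTerm, LinearMap.sub_apply, LinearMap.add_apply, LinearMap.neg_apply,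
    LinearMap.smul_apply, Module.End.mul_apply, Module.End.one_apply, mulLeft_apply,
    Derivation.coeFn_coe, map_add, map_sub, Derivation.leibniz, derivation_C, smul_eq_C_mul,
    smul_eq_mul, smul_add, neg_smul, pderiv_X_self, pderiv_X_of_ne, ne_eq, hxy, hxq, hyq,
    hxy.symm, hxq.symm, hyq.symm, not_false_eq_true, mul_zero, add_zero, mul_one,
    pderiv_pderiv_comm]
  -- the two `i²` terms cancel, so `C Complex.I` can stay an opaque atom
  ring

variable {S : Set σ} {x y q : σ}

theorem dhatTerm_mem_weylSubalgebra (hx : x ∈ S) (hy : y ∈ S) (hq : q ∈ S) :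
    dhatTerm x y q ∈ weylSubalgebra ℂ S :=
  sub_mem (Subalgebra.smul_mem _
      (mul_mem (mulLeft_X_mem_weylSubalgebra hq) (pderiv_mem_weylSubalgebra hx)) _)
    (mul_mem (pderiv_mem_weylSubalgebra hy) (pderiv_mem_weylSubalgebra hq))

theorem xhatTerm_mem_weylSubalgebra (hx : x ∈ S) (hy : y ∈ S) (hq : q ∈ S) :
    xhatTerm x y q ∈ weylSubalgebra ℂ S :=
  add_mem (Subalgebra.smul_mem _
      (mul_mem (mulLeft_X_mem_weylSubalgebra hy) (mulLeft_X_mem_weylSubalgebra hq)) _)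
    (mul_mem (mulLeft_X_mem_weylSubalgebra hx) (pderiv_mem_weylSubalgebra hq))

end SymplecticPair

theorem Finset.sum_mul_sum_sub_sum_mul_sum_of_commute {ι A : Type*} [Ring A] (s : Finset ι)
    (a b : ι → A) (h : ∀ i ∈ s, ∀ j ∈ s, i ≠ j → Commute (a i) (b j)) :
    (∑ i ∈ s, a i) * (∑ i ∈ s, b i) - (∑ i ∈ s, b i) * (∑ i ∈ s, a i)
      = ∑ i ∈ s, (a i * b i - b i * a i) := by
  rw [sum_mul_sum, sum_mul_sum, sum_comm (s := s) (t := s) (f := fun i j => b i * a j),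
    ← sum_sub_distrib]
  refine sum_congr rfl fun i hi => ?_
  rw [← sum_sub_distrib]
  refine sum_eq_single_of_mem i hi fun j hj hji => ?_
  rw [(h i hi j hj hji.symm).eq, sub_self]

theorem add_half_smul_mul_sq {𝕜 A : Type*} [Field 𝕜] [CharZero 𝕜] [Ring A] [Algebra 𝕜 A]
    {a b d : A} (ha : Commute d a) (hb : Commute d b) :
    (a + (1/2 : 𝕜) • (b * d)) ^ 2 = a ^ 2 + b * a * d + (1/2 : 𝕜) • ((a * b - b * a) * d)
      + (1/4 : 𝕜) • (b ^ 2 * d ^ 2) := by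
  have hda : b * d * a = b * a * d := by rw [mul_assoc, ha.eq, mul_assoc]
  have hdb : b * d * (b * d) = b ^ 2 * d ^ 2 := by
    rw [mul_assoc, ← mul_assoc d, hb.eq, sq, sq]; noncomm_ring
  rw [sq, add_mul, mul_add, mul_add, mul_smul_comm, smul_mul_assoc, smul_mul_smul_comm, hda, hdb,
    ← sq]
  simp only [sub_mul, smul_sub, mul_assoc]
  module

theorem Dhat_eq_sum (n : ℕ) : Dhat n = ∑ j : Fin n, dhatTerm (xv j) (yv j) (qv j) := rfl

theorem Xhat_eq_sum (n : ℕ) : Xhat n = ∑ j : Fin n, xhatTerm (xv j) (yv j) (qv j) := rfl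

theorem Ex_add_Ey_add_natCast (n : ℕ) :
    Ex n + Ey n + (n : Op4 n) = ∑ j : Fin n, (mX j * dX j + mY j * dY j + 1) := by
  simp [Ex, Ey, Finset.sum_add_distrib]

theorem disjoint_vars_of_ne {n : ℕ} {j k : Fin n} (h : j ≠ k) :
    Disjoint ({xv j, yv j, qv j} : Set (V4 n)) {xv k, yv k, qv k} := by
  simp [Set.disjoint_left, xv, yv, qv, h]

theorem Dhat_mul_Xhat_sub (n : ℕ) :
    Dhat n * Xhat n - Xhat n * Dhat n = -Complex.I • (Ex n + Ey n + (n : Op4 n)) := by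
  have hoff : ∀ j ∈ (Finset.univ : Finset (Fin n)), ∀ k ∈ Finset.univ, j ≠ k →
      Commute (dhatTerm (xv j) (yv j) (qv j)) (xhatTerm (xv k) (yv k) (qv k)) :=
    fun j _ k _ h => commute_of_mem_weylSubalgebra (disjoint_vars_of_ne h)
      (dhatTerm_mem_weylSubalgebra (by simp) (by simp) (by simp))
      (xhatTerm_mem_weylSubalgebra (by simp) (by simp) (by simp))
  rw [Dhat_eq_sum, Xhat_eq_sum, Finset.sum_mul_sum_sub_sum_mul_sum_of_commute _ _ _ hoff,
    Ex_add_Ey_add_natCast, Finset.smul_sum]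
  refine Finset.sum_congr rfl fun j _ => dhatTerm_mul_xhatTerm_sub ?_ ?_ ?_ <;> simp [xv, yv, qv]

theorem commute_dZ_Dhat (n : ℕ) : Commute (dZ n) (Dhat n) :=
  commute_of_mem_weylSubalgebra (disjoint_compl_right (a := {zv}))
    (pderiv_mem_weylSubalgebra rfl)
    (Subalgebra.sum_mem _ fun j _ => dhatTerm_mem_weylSubalgebra
      (by simp [xv, zv]) (by simp [yv, zv]) (by simp [qv, zv]))

theorem commute_dZ_Xhat (n : ℕ) : Commute (dZ n) (Xhat n) :=
  commute_of_mem_weylSubalgebra (disjoint_compl_right (a := {zv}))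
    (pderiv_mem_weylSubalgebra rfl)
    (Subalgebra.sum_mem _ fun j _ => xhatTerm_mem_weylSubalgebra
      (by simp [xv, zv]) (by simp [yv, zv]) (by simp [qv, zv]))

theorem Dhat_Xhat_commutator_and_D1_sq_general (n : ℕ) :
    (Dhat n * Xhat n - Xhat n * Dhat n
        = (-(Complex.I)) • (Ex n + Ey n + (n : Op4 n))) ∧
    D1 n ^ 2 = Dhat n ^ 2 + Xhat n * Dhat n * dZ n
        - (Complex.I / 2) • ((Ex n + Ey n + (n : Op4 n)) * dZ n)
        + (1/4 : ℂ) • (Xhat n ^ 2 * dZ n ^ 2) := by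
  refine ⟨Dhat_mul_Xhat_sub n, ?_⟩
  rw [D1, add_half_smul_mul_sq (commute_dZ_Dhat n) (commute_dZ_Xhat n), Dhat_mul_Xhat_sub,
    smul_mul_assoc, smul_smul]
  module

/-- [D̂, X̂] = −i(Ê + n), and consequently
D₁² = D̂² + X̂ D̂ ∂_ẑ − (i/2)(Ê + n)∂_ẑ + (1/4) X̂² ∂_ẑ². -/
theorem Dhat_Xhat_commutator_and_D1_sq (n : ℕ) (hn : 1 ≤ n) :
    (Dhat n * Xhat n - Xhat n * Dhat n
        = (-(Complex.I)) • (Ex n + Ey n + (n : Op4 n))) ∧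
    D1 n ^ 2 = Dhat n ^ 2 + Xhat n * Dhat n * dZ n
        - (Complex.I / 2) • ((Ex n + Ey n + (n : Op4 n)) * dZ n)
        + (1/4 : ℂ) • (Xhat n ^ 2 * dZ n ^ 2) :=
  Dhat_Xhat_commutator_and_D1_sq_general n
end
end
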